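/- arXiv:1303.5959 — 2 statements merged into one kernel-verified Lean document; each statement's English description precedes it below -/
import Mathlib

section
/- With notation as in the representation f̂ = φ̂_α ψ_α + Σ_{j≠0} A^{*j}(φ̂_α(·+2πj) A^j ψ_α) on [-π,π], where φ̂_α ≥ m_α := inf_{|ξ|≤π} φ̂_α(ξ) > 0 on [-π,π] and φ̂_α ≥ 0 everywhere, one has ‖ψ_α‖_{L²([-π,π])} ≤ (1/m_α)‖f̂‖_{L²([-π,π])}. -/
open MeasureTheory Complex Filter Real

noncomputable section

def μπ : Measure ℝ := volume.restrict (Set.Icc (-Real.pi) Real.pi)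

def Iπ : Set ℝ := Set.Icc (-Real.pi) Real.pi

lemma re_inner_smul_aux (c : ℝ) (z : ℂ) :
    (inner (𝕜 := ℂ) z ((c : ℂ) * z)).re = c * ‖z‖ ^ 2 := by
  simp [RCLike.inner_apply, Complex.conj_mul', Complex.sq_norm, Complex.normSq_apply]
  ring

set_option maxHeartbeats 1000000 in
/-- given the representation
`f̂ = φ̂ ψ + Σ_{j≠0} A^{*j}( φ̂(·+2πj) A^j ψ )` on `[-π,π]`, with `φ̂ ≥ 0` everywhere and
`φ̂ ≥ m := inf_{|ξ|≤π} φ̂ > 0` on `[-π,π]`, one has `‖ψ‖_{L²([-π,π])} ≤ m⁻¹ ‖f̂‖_{L²([-π,π])}`. -/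
theorem psi_norm_bound
    (x : ℤ → ℝ)
    (Apow : ℤ → Lp ℂ 2 μπ →L[ℂ] Lp ℂ 2 μπ)
    (hA0 : Apow 0 = ContinuousLinearMap.id ℂ (Lp ℂ 2 μπ))
    (φhat : ℝ → ℝ) (m : ℝ) (hm : 0 < m)
    (hpos : ∀ ξ, 0 ≤ φhat ξ)
    (hinf : IsGLB (φhat '' Iπ) m)
    (a : ℤ → ℂ) (ha : Summable (fun j => ‖a j‖ ^ 2))
    -- ψ = Σ_j a_j e^{-i x_j ξ} on ℝ, with restriction ψIπ to [-π,π]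
    (ψ : ℝ → ℂ)
    (hψmeas : ∀ R : ℝ, 0 < R → MemLp ψ 2 (volume.restrict (Set.Icc (-R) R)))
    (hψlim : ∀ R : ℝ, 0 < R →
      Tendsto (fun n : ℕ =>
          ∫ ξ in Set.Icc (-R) R,
            ‖ψ ξ - ∑ j ∈ Finset.Icc (-(n : ℤ)) (n : ℤ),
                a j * Complex.exp (-Complex.I * (x j) * ξ)‖ ^ 2)
        atTop (nhds 0))
    (ψIπ : Lp ℂ 2 μπ) (hψIπ : ∀ᵐ ξ ∂μπ, (ψIπ : ℝ → ℂ) ξ = ψ ξ)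
    (hAψ : ∀ j : ℤ, ∀ᵐ ξ ∂μπ,
      (Apow j ψIπ : ℝ → ℂ) ξ = ψ (ξ + 2 * Real.pi * j))
    -- the terms φ̂(·+2πj)·(A^j ψ) and the representation of f̂
    (G : ℤ → Lp ℂ 2 μπ)
    (hG : ∀ j : ℤ, ∀ᵐ ξ ∂μπ,
      (G j : ℝ → ℂ) ξ = (φhat (ξ + 2 * Real.pi * j) : ℂ) * (Apow j ψIπ : ℝ → ℂ) ξ)
    (F : Lp ℂ 2 μπ)
    (hrep : HasSum (fun j : ℤ => ContinuousLinearMap.adjoint (Apow j) (G j)) F) :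
    ‖ψIπ‖ ≤ m⁻¹ * ‖F‖ := by
  classical
  set t : ℤ → ℝ := fun j => Complex.re (inner (𝕜 := ℂ) (Apow j ψIπ) (G j)) with ht
  have hsum1 : HasSum (fun j : ℤ =>
      inner (𝕜 := ℂ) ψIπ (ContinuousLinearMap.adjoint (Apow j) (G j)))
      (inner (𝕜 := ℂ) ψIπ F) := (innerSL ℂ ψIπ).hasSum hrep
  have hsum2 : HasSum t (Complex.re (inner (𝕜 := ℂ) ψIπ F)) := by
    have := Complex.reCLM.hasSum hsum1
    refine this.congr_fun fun j => ?_
    simp [ht, ContinuousLinearMap.adjoint_inner_right]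
  have hterm : ∀ j : ℤ, t j =
      ∫ ξ, Complex.re (inner (𝕜 := ℂ) ((Apow j ψIπ : ℝ → ℂ) ξ) ((G j : ℝ → ℂ) ξ)) ∂μπ := by
    intro j
    rw [ht]
    simp only
    have h : (inner (𝕜 := ℂ) (Apow j ψIπ) (G j)) =
        ∫ ξ, (inner (𝕜 := ℂ) ((Apow j ψIπ : ℝ → ℂ) ξ) ((G j : ℝ → ℂ) ξ)) ∂μπ := rfl
    rw [h]
    exact (integral_re (L2.integrable_inner (𝕜 := ℂ) _ _)).symm
  have htpos : ∀ j : ℤ, 0 ≤ t j := by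
    intro j
    rw [hterm j]
    refine integral_nonneg_of_ae ?_
    filter_upwards [hG j] with ξ hξ
    rw [hξ, re_inner_smul_aux]
    exact mul_nonneg (hpos _) (sq_nonneg _)
  -- the j = 0 term dominates m ‖ψIπ‖²
  have hint : Integrable (fun ξ =>
      Complex.re (inner (𝕜 := ℂ) ((ψIπ : ℝ → ℂ) ξ) ((G 0 : ℝ → ℂ) ξ))) μπ :=
    (L2.integrable_inner (𝕜 := ℂ) ψIπ (G 0)).re
  have hintψ : Integrable (fun ξ => ‖(ψIπ : ℝ → ℂ) ξ‖ ^ 2) μπ := by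
    have := (L2.integrable_inner (𝕜 := ℂ) ψIπ ψIπ).re
    refine this.congr (Eventually.of_forall fun ξ => ?_)
    exact inner_self_eq_norm_sq _
  have hmem : ∀ᵐ ξ ∂μπ, ξ ∈ Set.Icc (-Real.pi) Real.pi :=
    ae_restrict_mem measurableSet_Icc
  have hnorm : ‖ψIπ‖ ^ 2 = ∫ ξ, ‖(ψIπ : ℝ → ℂ) ξ‖ ^ 2 ∂μπ := by
    have h : (inner (𝕜 := ℂ) ψIπ ψIπ) =
        ∫ ξ, (inner (𝕜 := ℂ) ((ψIπ : ℝ → ℂ) ξ) ((ψIπ : ℝ → ℂ) ξ)) ∂μπ := rfl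
    rw [← inner_self_eq_norm_sq (𝕜 := ℂ), h, ← integral_re (L2.integrable_inner (𝕜 := ℂ) ψIπ ψIπ)]
    exact integral_congr_ae (Eventually.of_forall fun ξ => congrArg _ rfl) |>.trans
      (integral_congr_ae (Eventually.of_forall fun ξ => inner_self_eq_norm_sq _))
  have h0 : m * ‖ψIπ‖ ^ 2 ≤ t 0 := by
    rw [hterm 0, hA0, hnorm, ← integral_const_mul]
    refine integral_mono_ae (hintψ.const_mul m) ?_ ?_
    · exact hint.congr (Eventually.of_forall fun ξ => rfl)
    · filter_upwards [hG 0, hmem] with ξ hξ hξmem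
      rw [hA0] at hξ
      simp only [ContinuousLinearMap.id_apply] at hξ ⊢
      rw [hξ]
      have : ξ + 2 * Real.pi * ((0 : ℤ) : ℝ) = ξ := by push_cast; ring
      rw [this, re_inner_smul_aux]
      have hmle : m ≤ φhat ξ := hinf.1 ⟨ξ, hξmem, rfl⟩
      exact mul_le_mul_of_nonneg_right hmle (sq_nonneg _)
  have hle : t 0 ≤ Complex.re (inner (𝕜 := ℂ) ψIπ F) :=
    le_hasSum hsum2 0 fun j _ => htpos j
  have hcs : Complex.re (inner (𝕜 := ℂ) ψIπ F) ≤ ‖ψIπ‖ * ‖F‖ :=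
    le_trans (RCLike.re_le_norm (K := ℂ) _) (norm_inner_le_norm (𝕜 := ℂ) ψIπ F)
  have key : m * ‖ψIπ‖ ^ 2 ≤ ‖ψIπ‖ * ‖F‖ := le_trans h0 (le_trans hle hcs)
  rcases eq_or_lt_of_le (norm_nonneg ψIπ) with h | h
  · rw [← h]
    positivity
  · rw [le_inv_mul_iff₀ hm]
    have h2 : m * ‖ψIπ‖ * ‖ψIπ‖ ≤ ‖F‖ * ‖ψIπ‖ := by nlinarith [key]
    exact le_of_mul_le_mul_right h2 h
end
end

section
/- The family {φ_α}_{α≥1}, φ_α(x) = √(2/π)·α/(α²+x²), is a regular family of interpolators: each φ_α and φ̂_α = e^{-α|·|} is in L¹; φ̂_α > 0 with inf_{|ξ|≤π} φ̂_α = e^{-απ} =: m_α; M_j(α) := sup_{|ξ|≤π}e^{-α|ξ+2πj|} = e^{-απ(2|j|-1)} for j ≠ 0, which is summable; Σ_{j≠0} M_j(α) ≤ C m_α with C independent of α ≥ 1; and for every |ξ| < π, m_α/φ̂_α(ξ) = e^{-α(π-|ξ|)} → 0 as α → ∞. -/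
open MeasureTheory Complex Filter Real

noncomputable section

/-- The Poisson kernel family. -/
def poisson (α : ℝ) (t : ℝ) : ℝ := Real.sqrt (2 / Real.pi) * α / (α ^ 2 + t ^ 2)

/-- Its Fourier transform `e^{-α|ξ|}`. -/
def poissonHat (α : ℝ) (ξ : ℝ) : ℝ := Real.exp (-α * |ξ|)

/-- `M_j(α) = sup_{|ξ|≤π} e^{-α|ξ+2πj|}`, which equals `e^{-απ(2|j|-1)}` for `j ≠ 0`
and `1` for `j = 0`. -/
def poissonM (α : ℝ) (j : ℤ) : ℝ :=
  if j = 0 then 1 else Real.exp (-α * Real.pi * (2 * |(j : ℝ)| - 1))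

/-- Integrability of `x ↦ e^{-α|x|}`. -/
lemma aux_int_hat {α : ℝ} (hα : 0 < α) :
    Integrable (fun x : ℝ => Real.exp (-α * |x|)) := by
  have hIoi : IntegrableOn (fun x : ℝ => Real.exp (-α * |x|)) (Set.Ioi 0) :=
    (exp_neg_integrableOn_Ioi 0 hα).congr_fun
      (fun x hx => by rw [abs_of_pos hx]) measurableSet_Ioi
  have hIic : IntegrableOn (fun x : ℝ => Real.exp (-α * |x|)) (Set.Iic 0) := by
    have m : MeasurableEmbedding (Neg.neg : ℝ → ℝ) := (Homeomorph.neg ℝ).measurableEmbedding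
    have h2 : IntegrableOn (fun x : ℝ => Real.exp (-α * |x|)) (Set.Iic 0)
        (Measure.map Neg.neg volume) := by
      rw [m.integrableOn_map_iff]
      simp_rw [Function.comp_def, abs_neg, Set.neg_preimage, Set.neg_Iic, neg_zero]
      exact Iff.mpr integrableOn_Ici_iff_integrableOn_Ioi hIoi
    rwa [Measure.map_neg_eq_self (volume : Measure ℝ)] at h2
  have h := hIic.union hIoi
  rwa [Set.Iic_union_Ioi, integrableOn_univ] at h

/-- Integrability of the Poisson kernel. -/
lemma aux_int_poisson {α : ℝ} (hα : 0 < α) (c : ℝ) :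
    Integrable (fun t : ℝ => c * α / (α ^ 2 + t ^ 2)) := by
  have h := (integrable_inv_one_add_sq.comp_div (ne_of_gt hα)).const_mul (c / α)
  refine h.congr (Filter.EventuallyEq.of_eq (funext fun t => ?_))
  have h1 : α ^ 2 + t ^ 2 ≠ 0 := by positivity
  field_simp

/-- The "off-center" part of `poissonM`. -/
lemma aux_hasSum_F {α : ℝ} (hα : 1 ≤ α) :
    HasSum (fun j : {j : ℤ // j ≠ 0} => poissonM α j)
      (Real.exp (-α * Real.pi) * (1 - Real.exp (-2 * α * Real.pi))⁻¹ + 0 +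
        Real.exp (-α * Real.pi) * (1 - Real.exp (-2 * α * Real.pi))⁻¹) := by
  set r : ℝ := Real.exp (-2 * α * Real.pi) with hr
  have hπ := Real.pi_pos
  have hr0 : 0 ≤ r := Real.exp_nonneg _
  have hr1 : r < 1 := by
    rw [hr, Real.exp_lt_one_iff]
    nlinarith
  set F : ℤ → ℝ := ({j : ℤ | j ≠ 0}).indicator (poissonM α) with hF
  have key : ∀ n : ℕ, F ((n : ℤ) + 1) = Real.exp (-α * Real.pi) * r ^ n := by
    intro n
    have hne : ((n : ℤ) + 1) ≠ 0 := by omega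
    have : F ((n : ℤ) + 1) = poissonM α ((n : ℤ) + 1) := by
      rw [hF, Set.indicator_of_mem (by simpa using hne)]
    rw [this, poissonM, if_neg hne, hr, ← Real.exp_nat_mul, ← Real.exp_add]
    congr 1
    have habs : |(((n : ℤ) + 1 : ℤ) : ℝ)| = (n : ℝ) + 1 := by
      push_cast
      rw [abs_of_pos (by positivity)]
    rw [habs]
    ring
  have key' : ∀ n : ℕ, F (-((n : ℤ) + 1)) = Real.exp (-α * Real.pi) * r ^ n := by
    intro n
    have hne : (-((n : ℤ) + 1)) ≠ 0 := by omega
    have : F (-((n : ℤ) + 1)) = poissonM α (-((n : ℤ) + 1)) := by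
      rw [hF, Set.indicator_of_mem (by simpa using hne)]
    rw [this, poissonM, if_neg hne, hr, ← Real.exp_nat_mul, ← Real.exp_add]
    congr 1
    have habs : |((-((n : ℤ) + 1) : ℤ) : ℝ)| = (n : ℝ) + 1 := by
      push_cast
      rw [abs_neg, abs_of_pos (by positivity)]
    rw [habs]
    ring
  have hgeo : HasSum (fun n : ℕ => Real.exp (-α * Real.pi) * r ^ n)
      (Real.exp (-α * Real.pi) * (1 - r)⁻¹) :=
    (hasSum_geometric_of_lt_one hr0 hr1).mul_left _
  have h1 : HasSum (fun n : ℕ => F ((n : ℤ) + 1))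
      (Real.exp (-α * Real.pi) * (1 - r)⁻¹) := by
    simpa only [key] using hgeo
  have h2 : HasSum (fun n : ℕ => F (-((n : ℤ) + 1)))
      (Real.exp (-α * Real.pi) * (1 - r)⁻¹) := by
    simpa only [key'] using hgeo
  have hF0 : F 0 = 0 := by
    rw [hF, Set.indicator_of_notMem (by simp)]
  have hsum : HasSum F (Real.exp (-α * Real.pi) * (1 - r)⁻¹ + F 0 +
      Real.exp (-α * Real.pi) * (1 - r)⁻¹) := HasSum.of_add_one_of_neg_add_one h1 h2
  rw [hF0] at hsum
  exact (hasSum_subtype_iff_indicator (s := {j : ℤ | j ≠ 0})).mpr hsum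

/-- the Poisson kernels `{φ_α}_{α ≥ 1}` form a regular family of
interpolators: (A1) `φ_α, φ̂_α ∈ L¹`; (A2) `φ̂_α = e^{-α|·|} > 0` with infimum
`m_α = e^{-απ}` on `[-π,π]`; (A3) `M_j(α)` as above is the sup of `φ̂_α(·+2πj)` on
`[-π,π]` and is summable; (H2) `Σ_{j≠0} M_j(α) ≤ K e^{-απ}` with `K` independent of
`α ≥ 1`; (H3) `m_α/φ̂_α(ξ) = e^{-α(π-|ξ|)} → 0` as `α → ∞` for every `|ξ| < π`. -/
theorem poisson_regular_family :
    (∀ α : ℝ, 1 ≤ α →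
      Integrable (poisson α) ∧
      Integrable (poissonHat α) ∧
      (∀ ξ : ℝ, 0 < poissonHat α ξ) ∧
      IsGLB (poissonHat α '' Iπ) (Real.exp (-α * Real.pi)) ∧
      (∀ j : ℤ, IsLUB ((fun ξ => poissonHat α (ξ + 2 * Real.pi * j)) '' Iπ)
        (poissonM α j)) ∧
      Summable (poissonM α)) ∧
    (∃ K : ℝ, 0 < K ∧ ∀ α : ℝ, 1 ≤ α →
      (∑' j : {j : ℤ // j ≠ 0}, poissonM α j) ≤ K * Real.exp (-α * Real.pi)) ∧
    (∀ ξ : ℝ, |ξ| < Real.pi →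
      Tendsto (fun α : ℝ => Real.exp (-α * Real.pi) / poissonHat α ξ)
        atTop (nhds 0)) := by
  have hπ := Real.pi_pos
  refine ⟨fun α hα => ?_, ?_, ?_⟩
  · have hα0 : 0 < α := lt_of_lt_of_le one_pos hα
    refine ⟨?_, ?_, ?_, ?_, ?_, ?_⟩
    · exact aux_int_poisson hα0 (Real.sqrt (2 / Real.pi))
    · exact aux_int_hat hα0
    · intro ξ; exact Real.exp_pos _
    · -- IsGLB
      refine IsLeast.isGLB ⟨⟨Real.pi, ⟨by linarith, le_refl _⟩, ?_⟩, ?_⟩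
      · show poissonHat α Real.pi = _
        rw [poissonHat, abs_of_pos hπ]
      · rintro y ⟨ξ, hξ, rfl⟩
        have h1 : |ξ| ≤ Real.pi := abs_le.mpr ⟨hξ.1, hξ.2⟩
        have h2 : 0 ≤ |ξ| := abs_nonneg ξ
        exact Real.exp_le_exp.mpr (by nlinarith)
    · -- IsLUB
      intro j
      rcases eq_or_ne j 0 with rfl | hj
      · refine IsGreatest.isLUB ⟨⟨0, ⟨by linarith, by linarith⟩, ?_⟩, ?_⟩
        · show poissonHat α (0 + 2 * Real.pi * ((0 : ℤ) : ℝ)) = poissonM α 0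
          simp [poissonHat, poissonM]
        · rintro y ⟨ξ, hξ, rfl⟩
          show poissonHat α _ ≤ poissonM α 0
          rw [poissonM, if_pos rfl, poissonHat]
          have h0 : 0 ≤ α * |ξ + 2 * Real.pi * ((0 : ℤ) : ℝ)| := by positivity
          calc Real.exp (-α * |ξ + 2 * Real.pi * ((0 : ℤ) : ℝ)|)
              ≤ Real.exp 0 := Real.exp_le_exp.mpr (by linarith)
            _ = 1 := Real.exp_zero
      · have hub : ∀ y ∈ (fun ξ => poissonHat α (ξ + 2 * Real.pi * (j : ℝ))) '' Iπ,
            y ≤ poissonM α j := by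
          rintro y ⟨ξ, hξ, rfl⟩
          have h1 : |ξ| ≤ Real.pi := abs_le.mpr ⟨hξ.1, hξ.2⟩
          have key : 2 * Real.pi * |(j : ℝ)| - Real.pi ≤ |ξ + 2 * Real.pi * (j : ℝ)| := by
            have h3 := abs_add_le (ξ + 2 * Real.pi * (j : ℝ)) (-ξ)
            rw [show ξ + 2 * Real.pi * (j : ℝ) + -ξ = 2 * Real.pi * (j : ℝ) by ring,
              abs_neg] at h3
            have he : |2 * Real.pi * (j : ℝ)| = 2 * Real.pi * |(j : ℝ)| := by
              rw [abs_mul, abs_of_pos (by linarith : (0 : ℝ) < 2 * Real.pi)]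
            linarith
          simp only [poissonM, if_neg hj, poissonHat]
          refine Real.exp_le_exp.mpr ?_
          nlinarith [mul_le_mul_of_nonneg_left key hα0.le]
        rcases hj.lt_or_gt with hneg | hpos
        · have hj1 : (j : ℝ) ≤ -1 := by exact_mod_cast (by omega : j ≤ -1)
          refine IsGreatest.isLUB ⟨⟨Real.pi, ⟨by linarith, le_refl _⟩, ?_⟩, hub⟩
          show poissonHat α (Real.pi + 2 * Real.pi * (j : ℝ)) = poissonM α j
          rw [poissonHat, poissonM, if_neg hj,
            abs_of_neg (by nlinarith : Real.pi + 2 * Real.pi * (j : ℝ) < 0),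
            abs_of_neg (by linarith : (j : ℝ) < 0)]
          congr 1
          ring
        · have hj1 : (1 : ℝ) ≤ (j : ℝ) := by exact_mod_cast hpos
          refine IsGreatest.isLUB ⟨⟨-Real.pi, ⟨le_refl _, by linarith⟩, ?_⟩, hub⟩
          show poissonHat α (-Real.pi + 2 * Real.pi * (j : ℝ)) = poissonM α j
          rw [poissonHat, poissonM, if_neg hj,
            abs_of_pos (by nlinarith : 0 < -Real.pi + 2 * Real.pi * (j : ℝ)),
            abs_of_pos (by linarith : (0 : ℝ) < (j : ℝ))]
          congr 1
          ring
    · -- Summable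
      have hr0 : 0 ≤ Real.exp (-2 * α * Real.pi) := Real.exp_nonneg _
      have hr1 : Real.exp (-2 * α * Real.pi) < 1 := by
        rw [Real.exp_lt_one_iff]; nlinarith
      have hgeo : Summable
          (fun n : ℕ => Real.exp (α * Real.pi) * Real.exp (-2 * α * Real.pi) ^ n) :=
        (summable_geometric_of_lt_one hr0 hr1).mul_left _
      have hb : ∀ n : ℕ, poissonM α (n : ℤ) ≤
          Real.exp (α * Real.pi) * Real.exp (-2 * α * Real.pi) ^ n := by
        intro n
        rcases Nat.eq_zero_or_pos n with rfl | hn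
        · simp only [Nat.cast_zero, poissonM, if_pos rfl, pow_zero, mul_one]
          exact Real.one_le_exp (by positivity)
        · rw [poissonM, if_neg (by exact_mod_cast hn.ne'), ← Real.exp_nat_mul, ← Real.exp_add]
          apply le_of_eq
          congr 1
          rw [show |((n : ℤ) : ℝ)| = (n : ℝ) by push_cast; exact abs_of_nonneg n.cast_nonneg]
          ring
      have hpos : ∀ n : ℕ, 0 ≤ poissonM α (n : ℤ) := by
        intro n
        rw [poissonM]
        split
        · norm_num
        · exact Real.exp_nonneg _
      have hnat : Summable (fun n : ℕ => poissonM α (n : ℤ)) :=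
        Summable.of_nonneg_of_le hpos hb hgeo
      have hneg : (fun n : ℕ => poissonM α (-(n : ℤ))) = fun n : ℕ => poissonM α (n : ℤ) := by
        funext n
        simp [poissonM, neg_eq_zero, abs_neg]
      exact Summable.of_nat_of_neg hnat (hneg ▸ hnat)
  · -- (H2)
    have h1 : Real.exp (-2 * Real.pi) < 1 := by
      rw [Real.exp_lt_one_iff]; nlinarith
    have h2 : 0 < 1 - Real.exp (-2 * Real.pi) := by linarith
    refine ⟨2 * (1 - Real.exp (-2 * Real.pi))⁻¹, by positivity, fun α hα => ?_⟩
    have hsum := aux_hasSum_F hα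
    rw [hsum.tsum_eq]
    have hle : Real.exp (-2 * α * Real.pi) ≤ Real.exp (-2 * Real.pi) := by
      apply Real.exp_le_exp.mpr; nlinarith
    have h3 : 0 < 1 - Real.exp (-2 * α * Real.pi) := by linarith
    have hinv : (1 - Real.exp (-2 * α * Real.pi))⁻¹ ≤ (1 - Real.exp (-2 * Real.pi))⁻¹ :=
      inv_anti₀ h2 (by linarith)
    have he : 0 ≤ Real.exp (-α * Real.pi) := Real.exp_nonneg _
    nlinarith [mul_le_mul_of_nonneg_left hinv he]
  · -- (H3)
    intro ξ hξ
    have h1 : Tendsto (fun α : ℝ => α * (|ξ| - Real.pi)) atTop atBot :=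
      Tendsto.atTop_mul_const_of_neg (by linarith) tendsto_id
    have h2 := Real.tendsto_exp_atBot.comp h1
    refine h2.congr fun α => ?_
    show Real.exp (α * (|ξ| - Real.pi)) = _
    rw [poissonHat, ← Real.exp_sub]
    congr 1
    ring
end
end
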